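/- Let φ : ℝⁿ → ℝ be differentiable, strictly convex along coordinates, with ∇φ block coordinate-wise Lipschitz with constants Hᵢ > 0, and let F : ℝⁿ → ℝ be differentiable and relative smooth along coordinates with respect to φ with constants Lᵢ > 0. Fix α ∈ ℝ, set S_α = ∑_{j=1}^N L_j^α, pᵢ = Lᵢ^α/S_α, and H_max = max_i Hᵢ. Fix x ∈ ℝⁿ and for each i let dᵢ* be a minimizer of d ↦ ⟨Uᵢᵀ∇F(x), d⟩ + Lᵢ D_φ(x + Uᵢd, x). Then ∑_{i=1}^N pᵢ F(x + Uᵢdᵢ*) ≤ F(x) − (1/(2 S_α H_max)) ∑_{i=1}^N Lᵢ^{α−1} ‖Uᵢᵀ∇F(x)‖². -/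

import Mathlib

/-!
On each block the Lipschitz bound on `∇φ` gives the quadratic upper bound
`D_φ(x + d, x) ≤ Hᵢ/2 ‖d‖²`, so the block subproblem is no worse than at the gradient step
`d = -(Lᵢ H_max)⁻¹ Uᵢᵀ∇F(x)`, whose model value is `-‖Uᵢᵀ∇F(x)‖² / (2 Lᵢ H_max)`.
Relative smoothness turns this into the descent `F(x + Uᵢdᵢ*) ≤ F(x) - ‖Uᵢᵀ∇F(x)‖² / (2 Lᵢ H_max)`,
and averaging with the weights `pᵢ = Lᵢ^α / S_α` gives the claim.
-/

noncomputable section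
open scoped RealInnerProductSpace

/-- `blockProj b i x` models `Uᵢ Uᵢᵀ x`: the vector of `ℝⁿ` keeping the coordinates of block
`i` (as given by the block assignment `b : Fin n → Fin N`) and zeroing the others.
A vector `d` of the block subspace (i.e. `Uᵢ d`) is modeled as a vector with
`blockProj b i d = d`; then `⟨Uᵢᵀ y, d⟩ = ⟪y, d⟫` and `‖Uᵢᵀ y‖ = ‖blockProj b i y‖`. -/
def blockProj {n N : ℕ} (b : Fin n → Fin N) (i : Fin N) (x : EuclideanSpace ℝ (Fin n)) :
    EuclideanSpace ℝ (Fin n) :=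
  (EuclideanSpace.equiv (Fin n) ℝ).symm (fun j => if b j = i then x j else 0)

section Bregman

variable {E : Type*} [NormedAddCommGroup E] [InnerProductSpace ℝ E] [CompleteSpace E]

def bregman (φ : E → ℝ) (x d : E) : ℝ := φ (x + d) - φ x - ⟪gradient φ x, d⟫

theorem bregman_le_of_inner_gradient_sub_le {φ : E → ℝ} (hφ : Differentiable ℝ φ) {x d : E}
    {H : ℝ} (hbound : ∀ t ∈ Set.Ioo (0 : ℝ) 1,
      ⟪gradient φ (x + t • d) - gradient φ x, d⟫ ≤ H * t * ‖d‖ ^ 2) :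
    bregman φ x d ≤ H / 2 * ‖d‖ ^ 2 := by
  set ψ : ℝ → ℝ := fun t => φ (x + t • d) - t * ⟪gradient φ x, d⟫ - H / 2 * ‖d‖ ^ 2 * t ^ 2
  have hψ : ∀ t : ℝ, HasDerivAt ψ
      (⟪gradient φ (x + t • d), d⟫ - ⟪gradient φ x, d⟫ - H / 2 * ‖d‖ ^ 2 * (2 * t)) t := by
    intro t
    have hline : HasDerivAt (fun s : ℝ => x + s • d) d t := by
      simpa using ((hasDerivAt_id t).smul_const d).const_add x
    have hφline : HasDerivAt (fun s : ℝ => φ (x + s • d)) ⟪gradient φ (x + t • d), d⟫ t := by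
      simpa [Function.comp_def] using
        (hφ (x + t • d)).hasGradientAt.hasFDerivAt.comp_hasDerivAt t hline
    refine (hφline.sub ?_).sub ?_
    · simpa using (hasDerivAt_id t).mul_const ⟪gradient φ x, d⟫
    · exact ((hasDerivAt_pow 2 t).const_mul (H / 2 * ‖d‖ ^ 2)).congr_deriv (by norm_num)
  have hanti : AntitoneOn ψ (Set.Icc 0 1) := by
    refine antitoneOn_of_deriv_nonpos (convex_Icc 0 1)
      (Differentiable.continuous fun t => (hψ t).differentiableAt).continuousOn
      (fun t _ => (hψ t).differentiableAt.differentiableWithinAt) fun t ht => ?_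
    rw [interior_Icc] at ht
    rw [(hψ t).deriv, ← inner_sub_left]
    linarith [hbound t ht]
  have h10 : ψ 1 ≤ ψ 0 :=
    hanti (Set.left_mem_Icc.2 zero_le_one) (Set.right_mem_Icc.2 zero_le_one) zero_le_one
  simp only [ψ, zero_smul, one_smul, add_zero, zero_mul, one_mul, sub_zero, one_pow, mul_one,
    ne_eq, OfNat.ofNat_ne_zero, not_false_eq_true, zero_pow, mul_zero] at h10
  rw [bregman]
  linarith

end Bregman

section Block

variable {n N : ℕ} (b : Fin n → Fin N) (i : Fin N)

theorem blockProj_apply (x : EuclideanSpace ℝ (Fin n)) (j : Fin n) :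
    blockProj b i x j = if b j = i then x j else 0 := rfl

theorem blockProj_blockProj (x : EuclideanSpace ℝ (Fin n)) :
    blockProj b i (blockProj b i x) = blockProj b i x := by
  ext j
  simp only [blockProj_apply]
  split_ifs <;> rfl

theorem blockProj_smul (c : ℝ) (x : EuclideanSpace ℝ (Fin n)) :
    blockProj b i (c • x) = c • blockProj b i x := by
  ext j
  simp only [blockProj_apply, PiLp.smul_apply, smul_eq_mul]
  split_ifs <;> simp

theorem inner_blockProj_left (y d : EuclideanSpace ℝ (Fin n)) :
    ⟪blockProj b i y, d⟫ = ⟪y, blockProj b i d⟫ := by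
  simp only [PiLp.inner_apply, RCLike.inner_apply, conj_trivial, blockProj_apply]
  refine Finset.sum_congr rfl fun j _ => ?_
  split_ifs <;> simp

theorem inner_blockProj_left_of_blockProj_eq {y d : EuclideanSpace ℝ (Fin n)}
    (hd : blockProj b i d = d) : ⟪blockProj b i y, d⟫ = ⟪y, d⟫ := by
  rw [inner_blockProj_left, hd]

variable {b i}

theorem bregman_le_of_blockLipschitz {φ : EuclideanSpace ℝ (Fin n) → ℝ}
    (hφ : Differentiable ℝ φ) {H : ℝ}
    (hlip : ∀ x h, blockProj b i h = h →
      ‖blockProj b i (gradient φ (x + h) - gradient φ x)‖ ≤ H * ‖h‖)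
    (x : EuclideanSpace ℝ (Fin n)) {d : EuclideanSpace ℝ (Fin n)} (hd : blockProj b i d = d) :
    bregman φ x d ≤ H / 2 * ‖d‖ ^ 2 := by
  refine bregman_le_of_inner_gradient_sub_le hφ fun t ht => ?_
  have htd : blockProj b i (t • d) = t • d := by rw [blockProj_smul, hd]
  calc ⟪gradient φ (x + t • d) - gradient φ x, d⟫
      = ⟪blockProj b i (gradient φ (x + t • d) - gradient φ x), d⟫ :=
        (inner_blockProj_left_of_blockProj_eq b i hd).symm
    _ ≤ ‖blockProj b i (gradient φ (x + t • d) - gradient φ x)‖ * ‖d‖ := real_inner_le_norm _ _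
    _ ≤ H * ‖t • d‖ * ‖d‖ := by gcongr; exact hlip x _ htd
    _ = H * t * ‖d‖ ^ 2 := by rw [norm_smul, Real.norm_of_nonneg ht.1.le]; ring

theorem apply_add_le_sub_of_blockMinimizer {φ F : EuclideanSpace ℝ (Fin n) → ℝ} {L H : ℝ}
    (hL : 0 < L) (hH : 0 < H) {x dstar : EuclideanSpace ℝ (Fin n)}
    (hrel : F (x + dstar) ≤ F x + ⟪gradient F x, dstar⟫ + L * bregman φ x dstar)
    (hmin : ∀ d, blockProj b i d = d →
      ⟪gradient F x, dstar⟫ + L * bregman φ x dstar ≤ ⟪gradient F x, d⟫ + L * bregman φ x d)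
    (hbregman : ∀ d, blockProj b i d = d → bregman φ x d ≤ H / 2 * ‖d‖ ^ 2) :
    F (x + dstar) ≤ F x - 1 / (2 * L * H) * ‖blockProj b i (gradient F x)‖ ^ 2 := by
  set g := blockProj b i (gradient F x)
  set s := (L * H)⁻¹
  have hg : blockProj b i (-s • g) = -s • g := by rw [blockProj_smul, blockProj_blockProj]
  have hinner : ⟪gradient F x, -s • g⟫ = -s * ‖g‖ ^ 2 := by
    rw [← inner_blockProj_left_of_blockProj_eq b i hg, real_inner_smul_right,
      real_inner_self_eq_norm_sq]
  have hnorm : ‖-s • g‖ ^ 2 = s ^ 2 * ‖g‖ ^ 2 := by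
    rw [norm_smul, mul_pow, Real.norm_eq_abs, sq_abs, neg_sq]
  have hstep : ⟪gradient F x, -s • g⟫ + L * bregman φ x (-s • g)
      ≤ -s * ‖g‖ ^ 2 + L * (H / 2 * (s ^ 2 * ‖g‖ ^ 2)) := by
    rw [hinner, ← hnorm]
    gcongr
    exact hbregman _ hg
  have hval : -s * ‖g‖ ^ 2 + L * (H / 2 * (s ^ 2 * ‖g‖ ^ 2)) = -(1 / (2 * L * H)) * ‖g‖ ^ 2 := by
    simp only [s]
    field_simp
    ring
  linarith [hmin _ hg]

end Block

theorem sum_rpow_div_sum_mul_le {ι : Type*} [Fintype ι] [Nonempty ι] {L : ι → ℝ}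
    (hL : ∀ i, 0 < L i) (α K y : ℝ) {f a : ι → ℝ}
    (hf : ∀ i, f i ≤ y - 1 / (2 * L i * K) * a i) :
    ∑ i, (L i ^ α / ∑ j, L j ^ α) * f i
      ≤ y - 1 / (2 * (∑ j, L j ^ α) * K) * ∑ i, L i ^ (α - 1) * a i := by
  set S := ∑ j, L j ^ α
  have hS : 0 < S := Finset.sum_pos (fun j _ => Real.rpow_pos_of_pos (hL j) α)
    Finset.univ_nonempty
  have hweights : ∑ i, L i ^ α / S = 1 := by rw [← Finset.sum_div, div_self hS.ne']
  calc ∑ i, (L i ^ α / S) * f i ≤ ∑ i, (L i ^ α / S) * (y - 1 / (2 * L i * K) * a i) :=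
        Finset.sum_le_sum fun i _ =>
          mul_le_mul_of_nonneg_left (hf i) (div_nonneg (Real.rpow_pos_of_pos (hL i) α).le hS.le)
    _ = (∑ i, L i ^ α / S) * y - 1 / (2 * S * K) * ∑ i, L i ^ (α - 1) * a i := by
        rw [Finset.sum_mul, Finset.mul_sum, ← Finset.sum_sub_distrib]
        refine Finset.sum_congr rfl fun i _ => ?_
        rw [Real.rpow_sub_one (hL i).ne']
        ring
    _ = y - 1 / (2 * S * K) * ∑ i, L i ^ (α - 1) * a i := by rw [hweights, one_mul]

theorem relative_smooth_expected_descent_general (n N : ℕ) (b : Fin n → Fin N)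
    (φ F : EuclideanSpace ℝ (Fin n) → ℝ)
    (hφdiff : Differentiable ℝ φ)
    (H : Fin N → ℝ) (hH : ∀ i, 0 < H i)
    (hφlip : ∀ (x h : EuclideanSpace ℝ (Fin n)) (i : Fin N), blockProj b i h = h →
      ‖blockProj b i (gradient φ (x + h) - gradient φ x)‖ ≤ H i * ‖h‖)
    (L : Fin N → ℝ) (hL : ∀ i, 0 < L i)
    (hrel : ∀ (x d : EuclideanSpace ℝ (Fin n)) (i : Fin N), blockProj b i d = d →
      F (x + d) ≤ F x + ⟪gradient F x, d⟫
        + L i * (φ (x + d) - φ x - ⟪gradient φ x, d⟫))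
    (α : ℝ) (Hmax : ℝ) (hHmax : IsGreatest (Set.range H) Hmax)
    (x : EuclideanSpace ℝ (Fin n)) (dstar : Fin N → EuclideanSpace ℝ (Fin n))
    (hdstar : ∀ i, blockProj b i (dstar i) = dstar i)
    (hminim : ∀ i, ∀ d : EuclideanSpace ℝ (Fin n), blockProj b i d = d →
      ⟪gradient F x, dstar i⟫ + L i * (φ (x + dstar i) - φ x - ⟪gradient φ x, dstar i⟫)
        ≤ ⟪gradient F x, d⟫ + L i * (φ (x + d) - φ x - ⟪gradient φ x, d⟫)) :
    ∑ i : Fin N, (L i ^ α / ∑ j : Fin N, L j ^ α) * F (x + dstar i)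
      ≤ F x - 1 / (2 * (∑ j : Fin N, L j ^ α) * Hmax)
          * ∑ i : Fin N, L i ^ (α - 1) * ‖blockProj b i (gradient F x)‖ ^ 2 := by
  obtain ⟨⟨imax, rfl⟩, hHle⟩ := hHmax
  have : Nonempty (Fin N) := ⟨imax⟩
  refine sum_rpow_div_sum_mul_le hL α _ _ fun i =>
    apply_add_le_sub_of_blockMinimizer (hL i) (hH imax) (hrel x _ i (hdstar i)) (hminim i) fun d hd => ?_
  calc bregman φ x d ≤ H i / 2 * ‖d‖ ^ 2 :=
        bregman_le_of_blockLipschitz hφdiff (fun x h => hφlip x h i) x hd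
    _ ≤ H imax / 2 * ‖d‖ ^ 2 := by gcongr; exact hHle ⟨i, rfl⟩

/-- let `φ` be differentiable, strictly convex along coordinates, with
`∇φ` block coordinate-wise Lipschitz with constants `Hᵢ > 0`, and `F` differentiable and
relative smooth along coordinates w.r.t. `φ` with constants `Lᵢ > 0`.  With
`S_α = ∑ⱼ Lⱼ^α`, `pᵢ = Lᵢ^α/S_α`, `H_max = maxᵢ Hᵢ`, if for each `i` the vector `dᵢ*`
minimizes the block subproblem, then
`∑ᵢ pᵢ F(x + Uᵢdᵢ*) ≤ F(x) − (1/(2 S_α H_max)) ∑ᵢ Lᵢ^{α−1}‖Uᵢᵀ∇F(x)‖²`. -/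
theorem relative_smooth_expected_descent (n N : ℕ) (b : Fin n → Fin N)
    (φ F : EuclideanSpace ℝ (Fin n) → ℝ)
    (hφdiff : Differentiable ℝ φ) (hFdiff : Differentiable ℝ F)
    (hφsc : ∀ (x : EuclideanSpace ℝ (Fin n)) (i : Fin N),
      StrictConvexOn ℝ {d : EuclideanSpace ℝ (Fin n) | blockProj b i d = d}
        (fun d => φ (x + d)))
    (H : Fin N → ℝ) (hH : ∀ i, 0 < H i)
    (hφlip : ∀ (x h : EuclideanSpace ℝ (Fin n)) (i : Fin N), blockProj b i h = h →
      ‖blockProj b i (gradient φ (x + h) - gradient φ x)‖ ≤ H i * ‖h‖)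
    (L : Fin N → ℝ) (hL : ∀ i, 0 < L i)
    (hrel : ∀ (x d : EuclideanSpace ℝ (Fin n)) (i : Fin N), blockProj b i d = d →
      F (x + d) ≤ F x + ⟪gradient F x, d⟫
        + L i * (φ (x + d) - φ x - ⟪gradient φ x, d⟫))
    (α : ℝ) (Hmax : ℝ) (hHmax : IsGreatest (Set.range H) Hmax)
    (x : EuclideanSpace ℝ (Fin n)) (dstar : Fin N → EuclideanSpace ℝ (Fin n))
    (hdstar : ∀ i, blockProj b i (dstar i) = dstar i)
    (hminim : ∀ i, ∀ d : EuclideanSpace ℝ (Fin n), blockProj b i d = d →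
      ⟪gradient F x, dstar i⟫ + L i * (φ (x + dstar i) - φ x - ⟪gradient φ x, dstar i⟫)
        ≤ ⟪gradient F x, d⟫ + L i * (φ (x + d) - φ x - ⟪gradient φ x, d⟫)) :
    ∑ i : Fin N, (L i ^ α / ∑ j : Fin N, L j ^ α) * F (x + dstar i)
      ≤ F x - 1 / (2 * (∑ j : Fin N, L j ^ α) * Hmax)
          * ∑ i : Fin N, L i ^ (α - 1) * ‖blockProj b i (gradient F x)‖ ^ 2 :=
  relative_smooth_expected_descent_general n N b φ F hφdiff H hH hφlip L hL hrel α Hmax hHmax x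
    dstar hdstar hminim
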